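/- arXiv:2306.10417 — 6 statements merged into one kernel-verified Lean document; each statement's English description precedes it below -/
import Mathlib

section
/- For every nonnegative integer s, the maximum loneliness of the four positive integer speeds 8, 4s+3, 4s+11, 4s+19 equals (2s+7)/(8s+30); that is, ML(8, 4s+3, 4s+11, 4s+19) = (2s+7)/(8s+30). -/
/-!
Write `Q = 8s + 30` and `C = (2s + 7)/Q`. At `t = (13 - 4s - 2s²)/Q` the four speeds have
fractional parts `(4s+14)/Q`, `(2s+9)/Q`, `(6s+23)/Q` and `(2s+7)/Q`, so `ML ≥ C`.

Conversely, since the speeds are `8`, `v`, `v + 8`, `v + 16` with `v = 4s + 3`, the positions of a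
time `t` are `α`, `η`, `η + α`, `η + 2α` modulo `1`, where after replacing `t` by `-t` we may take
`α ∈ (C, 1/2]`. These four numbers avoiding `[-C, C]` modulo `1` is impossible: if `α` is small
the progression `η, η + α, η + 2α` cannot jump over `[1 - C, 1 + C]`; for middling `α` it covers
it; and in the remaining cases `8η - vα`, an integer because `8 · vt = v · 8t`, is pinned strictly
between two consecutive integers.
-/

/-- `dnn x` is the distance from `x` to the nearest integer:
`dnn x = min_{m : ℤ} |x - m|`. -/
noncomputable def dnn (x : ℝ) : ℝ := ⨅ m : ℤ, |x - m|

/-- The maximum loneliness of speeds `v 0, …, v (n-1)`: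
`ML v = sup_{t : ℝ} min_{i} dnn (t * v i)`. -/
noncomputable def ML {n : ℕ} (v : Fin n → ℝ) : ℝ := ⨆ t : ℝ, ⨅ i, dnn (t * v i)

lemma dnn_le_abs_sub (x : ℝ) (m : ℤ) : dnn x ≤ |x - m| :=
  ciInf_le ⟨0, by rintro y ⟨k, rfl⟩; exact abs_nonneg _⟩ m

lemma dnn_neg (x : ℝ) : dnn (-x) = dnn x := by
  unfold dnn
  rw [← (Equiv.neg ℤ).iInf_comp]
  congr 1
  ext m
  rw [Equiv.neg_apply, Int.cast_neg, ← abs_neg]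
  ring_nf

lemma div_le_dnn {x b r Q : ℝ} (a : ℤ) (hQ : 0 < Q) (hx : x = a + r / Q)
    (hb : b ≤ r) (hr : r ≤ Q - b) : b / Q ≤ dnn x := by
  refine le_ciInf fun m => ?_
  have hxm : x - m = ((a - m : ℤ) : ℝ) + r / Q := by rw [hx]; push_cast; ring
  rcases le_or_gt m a with h | h
  · have h0 : (0 : ℝ) ≤ ((a - m : ℤ) : ℝ) := by exact_mod_cast sub_nonneg.mpr h
    have : b / Q ≤ r / Q := div_le_div_of_nonneg_right hb hQ.le
    exact (by linarith : b / Q ≤ x - m).trans (le_abs_self _)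
  · have h0 : ((a - m : ℤ) : ℝ) ≤ -1 := by exact_mod_cast (by omega : a - m ≤ -1)
    have : b / Q ≤ 1 - r / Q := by
      rw [one_sub_div hQ.ne']
      exact div_le_div_of_nonneg_right (by linarith) hQ.le
    exact (by linarith : b / Q ≤ -(x - m)).trans (neg_le_abs _)

lemma ML_eq_of_forall_exists {n : ℕ} {v : Fin n → ℝ} {c : ℝ}
    (h_le : ∀ t, ∃ i, dnn (t * v i) ≤ c) (h_ge : ∃ t, ∀ i, c ≤ dnn (t * v i)) :
    ML v = c := by
  obtain ⟨t₀, ht₀⟩ := h_ge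
  have : Nonempty (Fin n) := ⟨(h_le 0).choose⟩
  have hinf : ∀ t, ⨅ i, dnn (t * v i) ≤ c := fun t =>
    let ⟨i, hi⟩ := h_le t
    (ciInf_le (Set.finite_range _).bddBelow i).trans hi
  exact le_antisymm (ciSup_le hinf)
    ((le_ciInf ht₀).trans (le_ciSup ⟨c, Set.forall_mem_range.2 hinf⟩ t₀))

lemma le_dnn_mul_speeds (s : ℕ) (i : Fin 4) :
    (2 * (s : ℝ) + 7) / (8 * (s : ℝ) + 30) ≤
      dnn ((13 - 4 * (s : ℝ) - 2 * (s : ℝ) ^ 2) / (8 * (s : ℝ) + 30) *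
        ![(8 : ℝ), 4 * (s : ℝ) + 3, 4 * (s : ℝ) + 11, 4 * (s : ℝ) + 19] i) := by
  have hQ : (0 : ℝ) < 8 * s + 30 := by positivity
  have hs : (0 : ℝ) ≤ s := Nat.cast_nonneg s
  fin_cases i
  · exact div_le_dnn (3 - 2 * s) hQ (r := 4 * s + 14)
      (by push_cast; field_simp; ring) (by linarith) (by linarith)
  · exact div_le_dnn (1 + s - s ^ 2) hQ (r := 2 * s + 9)
      (by push_cast; field_simp; ring) (by linarith) (by linarith)
  · exact div_le_dnn (4 - s - s ^ 2) hQ (r := 6 * s + 23)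
      (by push_cast; field_simp; ring) (by linarith) (by linarith)
  · exact div_le_dnn (8 - 3 * s - s ^ 2) hQ (r := 2 * s + 7)
      (by push_cast; field_simp; ring) (by linarith) (by linarith)

lemma intCast_notMem_Ioo_add_one (m n : ℤ) : (n : ℝ) ∉ Set.Ioo (m : ℝ) (m + 1) := by
  rintro ⟨h₁, h₂⟩
  have h₁' : m < n := by exact_mod_cast h₁
  have h₂' : n < m + 1 := by exact_mod_cast h₂
  omega

lemma false_of_far_of_int_relation (s : ℕ) (n : ℤ) {α η : ℝ}
    (hn : (n : ℝ) = 8 * η - (4 * s + 3) * α)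
    (hα : (2 * (s : ℝ) + 7) / (8 * (s : ℝ) + 30) < α) (hα' : α ≤ 1 / 2)
    (hη : (2 * (s : ℝ) + 7) / (8 * (s : ℝ) + 30) < η)
    (hη' : η < 1 - (2 * (s : ℝ) + 7) / (8 * (s : ℝ) + 30))
    (h₂ : (2 * (s : ℝ) + 7) / (8 * (s : ℝ) + 30) < |η + α - 1|)
    (h₃ : (2 * (s : ℝ) + 7) / (8 * (s : ℝ) + 30) < |η + 2 * α - 1|) : False := by
  set C := (2 * (s : ℝ) + 7) / (8 * (s : ℝ) + 30)
  have hs : (0 : ℝ) ≤ s := Nat.cast_nonneg s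
  have hQ : (0 : ℝ) < 8 * s + 30 := by positivity
  have hCQ : C * (8 * s + 30) = 2 * s + 7 := div_mul_cancel₀ _ hQ.ne'
  have hC : 7 / 30 ≤ C ∧ C < 1 / 4 := by
    constructor
    · rw [le_div_iff₀ hQ]; linarith
    · rw [div_lt_iff₀ hQ]; linarith
  rw [lt_abs] at h₂ h₃
  rcases lt_or_ge α (1 / 2 - C) with ha | ha
  · have hη₃ : η + 2 * α < 1 - C := by
      rcases h₃ with h | h <;> rcases h₂ with h' | h' <;> linarith
    have := mul_lt_mul_of_pos_left ha (by positivity : (0 : ℝ) < 4 * s + 3)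
    have := mul_lt_mul_of_pos_left hα (by positivity : (0 : ℝ) < 4 * s + 19)
    exact intCast_notMem_Ioo_add_one (1 - s) n
      ⟨by push_cast; linarith, by push_cast; linarith⟩
  rcases le_or_gt α (2 * C) with hb | hb
  · rcases h₃ with h | h <;> rcases h₂ with h' | h' <;> linarith
  have hη₃ : 1 + C < η + 2 * α := by rcases h₃ with h | h <;> linarith
  rcases h₂ with h | h
  · have := mul_le_mul_of_nonneg_left hα' (by positivity : (0 : ℝ) ≤ 4 * s + 11)
    have := mul_lt_mul_of_pos_left hb (by positivity : (0 : ℝ) < 4 * s + 3)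
    exact intCast_notMem_Ioo_add_one (4 - 2 * s) n
      ⟨by push_cast; linarith, by push_cast; linarith⟩
  · have := mul_le_mul_of_nonneg_left hα' (by positivity : (0 : ℝ) ≤ 4 * s + 19)
    have := mul_lt_mul_of_pos_left hb (by positivity : (0 : ℝ) < 4 * s + 11)
    exact intCast_notMem_Ioo_add_one (-2 * s) n
      ⟨by push_cast; linarith, by push_cast; linarith⟩

lemma exists_dnn_mul_speeds_le_of_mem_Ioc (s : ℕ) (θ : ℝ) (A : ℤ)
    (hα : 8 * θ - A ∈ Set.Ioc ((2 * (s : ℝ) + 7) / (8 * (s : ℝ) + 30)) (1 / 2)) :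
    ∃ i, dnn (θ * ![(8 : ℝ), 4 * (s : ℝ) + 3, 4 * (s : ℝ) + 11, 4 * (s : ℝ) + 19] i) ≤
      (2 * (s : ℝ) + 7) / (8 * (s : ℝ) + 30) := by
  by_contra! h
  have far : ∀ i (m : ℤ), (2 * (s : ℝ) + 7) / (8 * (s : ℝ) + 30) <
      |θ * ![(8 : ℝ), 4 * (s : ℝ) + 3, 4 * (s : ℝ) + 11, 4 * (s : ℝ) + 19] i - m| :=
    fun i m => (h i).trans_le (dnn_le_abs_sub _ m)
  set C := (2 * (s : ℝ) + 7) / (8 * (s : ℝ) + 30)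
  set B := ⌊(4 * (s : ℝ) + 3) * θ⌋
  have hB := Int.floor_le ((4 * (s : ℝ) + 3) * θ)
  have hB' := Int.lt_floor_add_one ((4 * (s : ℝ) + 3) * θ)
  have h₁ : C < |θ * (4 * s + 3) - B| := far 1 B
  have h₁' : C < |θ * (4 * s + 3) - (B + 1 : ℤ)| := far 1 (B + 1)
  have h₂ : C < |θ * (4 * s + 11) - (A + B + 1 : ℤ)| := far 2 (A + B + 1)
  have h₃ : C < |θ * (4 * s + 19) - (2 * A + B + 1 : ℤ)| := far 3 (2 * A + B + 1)
  push_cast at h₁' h₂ h₃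
  rw [abs_of_nonneg (by linarith)] at h₁
  rw [abs_of_nonpos (by linarith)] at h₁'
  refine false_of_far_of_int_relation s ((4 * s + 3) * A - 8 * B) (α := 8 * θ - A)
    (η := (4 * s + 3) * θ - B) (by push_cast; ring) hα.1 hα.2 (by linarith) (by linarith) ?_ ?_
  · convert h₂ using 2; ring
  · convert h₃ using 2; ring

lemma exists_dnn_mul_speeds_le (s : ℕ) (θ : ℝ) :
    ∃ i, dnn (θ * ![(8 : ℝ), 4 * (s : ℝ) + 3, 4 * (s : ℝ) + 11, 4 * (s : ℝ) + 19] i) ≤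
      (2 * (s : ℝ) + 7) / (8 * (s : ℝ) + 30) := by
  rcases le_or_gt (dnn (θ * 8)) ((2 * (s : ℝ) + 7) / (8 * (s : ℝ) + 30)) with h | h
  · exact ⟨0, h⟩
  rw [mul_comm θ 8] at h
  have hα := h.trans_le (dnn_le_abs_sub _ (round (8 * θ)))
  have hα' := abs_sub_round (8 * θ)
  rcases le_or_gt 0 (8 * θ - round (8 * θ)) with hpos | hneg
  · rw [abs_of_nonneg hpos] at hα hα'
    exact exists_dnn_mul_speeds_le_of_mem_Ioc s θ _ ⟨hα, hα'⟩
  · rw [abs_of_neg hneg] at hα hα'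
    obtain ⟨i, hi⟩ := exists_dnn_mul_speeds_le_of_mem_Ioc s (-θ) (-round (8 * θ))
      ⟨by push_cast; linarith, by push_cast; linarith⟩
    exact ⟨i, by rwa [neg_mul, dnn_neg] at hi⟩

theorem stmt_0 (s : ℕ) :
    ML ![(8 : ℝ), 4 * (s : ℝ) + 3, 4 * (s : ℝ) + 11, 4 * (s : ℝ) + 19] =
      (2 * (s : ℝ) + 7) / (8 * (s : ℝ) + 30) :=
  ML_eq_of_forall_exists (exists_dnn_mul_speeds_le s) ⟨_, le_dnn_mul_speeds s⟩
end

section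
/- The Loneliness Spectrum Conjecture fails for n = 4: the positive integer speeds 8, 3, 11, 19 satisfy ML(8, 3, 11, 19) = 7/30, and 7/30 < 1/4, and there is no positive integer s with 7/30 = s/(4s+1). -/
lemma dnn_eq_abs_sub_round (x : ℝ) : dnn x = |x - round x| :=
  le_antisymm (ciInf_le ⟨0, by rintro _ ⟨m, rfl⟩; positivity⟩ _) (le_ciInf (round_le x))

lemma dnn_le_half (x : ℝ) : dnn x ≤ 1 / 2 :=
  (dnn_eq_abs_sub_round x).trans_le (abs_sub_round x)

lemma dnn_add_int (x : ℝ) (k : ℤ) : dnn (x + k) = dnn x := by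
  refine le_antisymm ?_ ?_
  · simpa [dnn_eq_abs_sub_round x] using dnn_le_abs_sub (x + k) (round x + k)
  · simpa [dnn_eq_abs_sub_round (x + k)] using dnn_le_abs_sub x (round (x + k) - k)

lemma exists_mem_Icc_dnn_mul_int_eq (t : ℝ) :
    ∃ u ∈ Set.Icc (0 : ℝ) (1 / 2), ∀ k : ℤ, dnn (t * k) = dnn (u * k) := by
  refine ⟨|t - round t|, ⟨abs_nonneg _, abs_sub_round t⟩, fun k => ?_⟩
  rcases abs_choice (t - round t) with h | h
  · rw [h, show t * k = (t - round t) * k + ((round t * k : ℤ) : ℝ) by push_cast; ring,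
      dnn_add_int]
  · rw [h, show t * k = -(-(t - round t) * k) + ((round t * k : ℤ) : ℝ) by push_cast; ring,
      dnn_add_int, dnn_neg]

lemma ML_le {n : ℕ} {v : Fin n → ℝ} {c : ℝ} (h : ∀ t, ∃ i, dnn (t * v i) ≤ c) : ML v ≤ c :=
  ciSup_le fun t =>
    let ⟨i, hi⟩ := h t
    (ciInf_le (Set.finite_range _).bddBelow i).trans hi

lemma ML_intCast_le {n : ℕ} (k : Fin n → ℤ) {c : ℝ}
    (h : ∀ u ∈ Set.Icc (0 : ℝ) (1 / 2), ∃ i, dnn (u * k i) ≤ c) :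
    ML (fun i => (k i : ℝ)) ≤ c :=
  ML_le fun t => by
    obtain ⟨u, hu, htu⟩ := exists_mem_Icc_dnn_mul_int_eq t
    obtain ⟨i, hi⟩ := h u hu
    exact ⟨i, (htu (k i)).trans_le hi⟩

lemma le_ML {n : ℕ} [NeZero n] {v : Fin n → ℝ} {c : ℝ} (t : ℝ) (h : ∀ i, c ≤ dnn (t * v i)) :
    c ≤ ML v := by
  have bdd : BddAbove (Set.range fun t : ℝ => ⨅ i, dnn (t * v i)) := by
    refine ⟨1 / 2, ?_⟩
    rintro _ ⟨s, rfl⟩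
    exact (ciInf_le (Set.finite_range _).bddBelow 0).trans (dnn_le_half _)
  exact (le_ciInf h).trans (le_ciSup bdd t)

lemma exists_dnn_le_seven_div_thirty (u : ℝ) (hu : u ∈ Set.Icc (0 : ℝ) (1 / 2)) :
    ∃ i, dnn (u * (![8, 3, 11, 19] : Fin 4 → ℤ) i) ≤ 7 / 30 := by
  obtain ⟨hu₀, hu₁⟩ := hu
  have near (i : Fin 4) (m : ℤ) (h : |u * (![8, 3, 11, 19] : Fin 4 → ℤ) i - m| ≤ 7 / 30) :
      ∃ i, dnn (u * (![8, 3, 11, 19] : Fin 4 → ℤ) i) ≤ 7 / 30 :=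
    ⟨i, (dnn_le_abs_sub _ m).trans h⟩
  -- each threshold is the left end `(m - 7/30) / k` of the next runner's window
  rcases le_or_gt u (23 / 330) with h | h
  · exact near 1 0 (abs_le.2 ⟨by simp; linarith, by simp; linarith⟩)
  rcases le_or_gt u (23 / 240) with h | h
  · exact near 2 1 (abs_le.2 ⟨by simp; linarith, by simp; linarith⟩)
  rcases le_or_gt u (83 / 570) with h | h
  · exact near 0 1 (abs_le.2 ⟨by simp; linarith, by simp; linarith⟩)
  rcases le_or_gt u (53 / 330) with h | h
  · exact near 3 3 (abs_le.2 ⟨by simp; linarith, by simp; linarith⟩)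
  rcases le_or_gt u (113 / 570) with h | h
  · exact near 2 2 (abs_le.2 ⟨by simp; linarith, by simp; linarith⟩)
  rcases le_or_gt u (53 / 240) with h | h
  · exact near 3 4 (abs_le.2 ⟨by simp; linarith, by simp; linarith⟩)
  rcases le_or_gt u (23 / 90) with h | h
  · exact near 0 2 (abs_le.2 ⟨by simp; linarith, by simp; linarith⟩)
  rcases le_or_gt u (233 / 570) with h | h
  · exact near 1 1 (abs_le.2 ⟨by simp; linarith, by simp; linarith⟩)
  rcases le_or_gt u (13 / 30) with h | h
  · exact near 3 8 (abs_le.2 ⟨by simp; linarith, by simp; linarith⟩)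
  rcases le_or_gt u (113 / 240) with h | h
  · exact near 2 5 (abs_le.2 ⟨by simp; linarith, by simp; linarith⟩)
  exact near 0 4 (abs_le.2 ⟨by simp; linarith, by simp; linarith⟩)

lemma seven_div_thirty_le_dnn (i : Fin 4) :
    7 / 30 ≤ dnn (13 / 30 * (![8, 3, 11, 19] : Fin 4 → ℤ) i) := by
  fin_cases i <;> norm_num [dnn_eq_abs_sub_round, round_eq, abs_of_pos, abs_of_neg]

theorem stmt_1 :
    ML ![(8 : ℝ), 3, 11, 19] = 7 / 30 ∧ (7 / 30 : ℝ) < 1 / 4 ∧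
      ¬ ∃ s : ℕ, 0 < s ∧ (7 / 30 : ℝ) = (s : ℝ) / (4 * (s : ℝ) + 1) := by
  have speeds : ![(8 : ℝ), 3, 11, 19] = fun i => ((![8, 3, 11, 19] : Fin 4 → ℤ) i : ℝ) := by
    ext i; fin_cases i <;> rfl
  refine ⟨le_antisymm ?_ ?_, by norm_num, ?_⟩
  · rw [speeds]; exact ML_intCast_le _ exists_dnn_le_seven_div_thirty
  · rw [speeds]; exact le_ML (13 / 30) seven_div_thirty_le_dnn
  · rintro ⟨s, -, hs⟩
    rw [eq_div_iff (by positivity)] at hs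
    have : 2 * s = 7 := by exact_mod_cast (by linarith : (2 * s : ℝ) = 7)
    omega
end

section
/- For every real number t, min(‖t + 1/2‖, ‖2t‖, ‖3t + 1/2‖) ≤ 1/4. -/
/- With `s = t - round t ∈ [-1/2, 1/2]`, the points `±1/8, ±1/4` cut this interval into five
pieces, on each of which one of `t + 1/2`, `2t`, `3t + 1/2` lies within `1/4` of an explicit
integer. -/

lemma dnn_le_of_abs_sub_le {x c : ℝ} (m : ℤ) (h : |x - m| ≤ c) : dnn x ≤ c :=
  (ciInf_le ⟨0, fun _ ⟨_, hk⟩ => hk ▸ abs_nonneg _⟩ m).trans h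

theorem stmt_3 (t : ℝ) :
    min (dnn (t + 1 / 2)) (min (dnn (2 * t)) (dnn (3 * t + 1 / 2))) ≤ 1 / 4 := by
  obtain ⟨hlo, hhi⟩ := abs_le.mp (abs_sub_round t)
  set n := round t
  have near {x : ℝ} (m : ℤ) (h₁ : -(1 / 4) ≤ x - m) (h₂ : x - m ≤ 1 / 4) : dnn x ≤ 1 / 4 :=
    dnn_le_of_abs_sub_le m (abs_le.mpr ⟨h₁, h₂⟩)
  rcases le_total (t - n) (-(1 / 4)) with hs | hs₁
  · exact min_le_of_left_le <| near n (by linarith) (by linarith)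
  rcases le_total (t - n) (-(1 / 8)) with hs | hs₂
  · exact min_le_of_right_le <| min_le_of_right_le <|
      near (3 * n) (by push_cast; linarith) (by push_cast; linarith)
  rcases le_total (t - n) (1 / 8) with hs | hs₃
  · exact min_le_of_right_le <| min_le_of_left_le <|
      near (2 * n) (by push_cast; linarith) (by push_cast; linarith)
  rcases le_total (t - n) (1 / 4) with hs | hs₄
  · exact min_le_of_right_le <| min_le_of_right_le <|
      near (3 * n + 1) (by push_cast; linarith) (by push_cast; linarith)
  · exact min_le_of_left_le <| near (n + 1) (by push_cast; linarith) (by push_cast; linarith)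
end

section
/- Let v₁, v₂, v₃ be positive integers with gcd(v₁, v₂, v₃) = 1. If some two of the speeds share a common factor of at least 2 (i.e., gcd(vᵢ, vⱼ) ≥ 2 for some i ≠ j), then ML(v₁, v₂, v₃) ≥ 1/4. -/
lemma dnn_ge (x c : ℝ) (j : ℤ) (h1 : c ≤ x - j) (h2 : x - j ≤ 1 - c) : c ≤ dnn x := by
  apply le_ciInf
  intro k
  rcases le_or_gt k j with h | h
  · have hk : (k : ℝ) ≤ j := by exact_mod_cast h
    have : c ≤ x - k := by linarith
    exact this.trans (le_abs_self _)
  · have hk : (j : ℝ) + 1 ≤ k := by exact_mod_cast h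
    have : c ≤ -(x - k) := by linarith
    exact this.trans (neg_le_abs _)

lemma ML_ge (v : Fin 3 → ℝ) (c t : ℝ) (h : ∀ i, c ≤ dnn (t * v i)) : c ≤ ML v := by
  have hb : BddAbove (Set.range fun t : ℝ => ⨅ i, dnn (t * v i)) := by
    refine ⟨1 / 2, ?_⟩
    rintro _ ⟨s, rfl⟩
    exact (ciInf_le (Set.Finite.bddBelow (Set.finite_range _)) 0).trans (dnn_le_half _)
  exact (le_ciInf h).trans (le_ciSup hb t)

lemma key (a b w d : ℕ) (ha : 0 < a) (hb : 0 < b) (hw : 0 < w) (hd : 2 ≤ d)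
    (hab : Nat.Coprime a b) (hdw : Nat.Coprime d w) :
    ∃ t : ℝ, 1/4 ≤ dnn (t * ((d : ℝ) * a)) ∧ 1/4 ≤ dnn (t * ((d : ℝ) * b)) ∧
      1/4 ≤ dnn (t * w) := by
  set N : ℕ := a + b with hN
  have hN2 : 2 ≤ N := by omega
  set m : ℕ := (N + 2) / 3 with hm
  have hm1 : N ≤ 3 * m := by omega
  have hm2 : 3 * m ≤ 2 * N := by omega
  have haN : Nat.Coprime a N := by
    have := Nat.coprime_add_self_right.mpr hab
    simpa [hN] using this
  obtain ⟨x, y, hxy⟩ := (Nat.isCoprime_iff_coprime.mpr haN)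
  obtain ⟨x', y', hxy'⟩ := (Nat.isCoprime_iff_coprime.mpr hdw)
  have hN0 : (0 : ℝ) < N := by positivity
  have hd0 : (0 : ℝ) < d := by positivity
  have hNne : (N : ℝ) ≠ 0 := ne_of_gt hN0
  have hdne : (d : ℝ) ≠ 0 := ne_of_gt hd0
  have hxyR : (x : ℝ) * a + y * N = 1 := by exact_mod_cast hxy
  have hxyR' : (x' : ℝ) * d + y' * w = 1 := by exact_mod_cast hxy'
  set s : ℤ := m * x with hs
  set θ : ℝ := (s * w) / (N * d) with hθ
  set r : ℤ := ⌈(d : ℝ) / 4 - θ * d⌉ with hr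
  set u : ℤ := r * y' with hu
  set t : ℝ := ((u : ℝ) + s / N) / d with ht
  have hmN1 : (1 : ℝ) / 3 ≤ (m : ℝ) / N := by
    rw [le_div_iff₀ hN0]
    have : (N : ℝ) ≤ 3 * m := by exact_mod_cast hm1
    linarith
  have hmN2 : (m : ℝ) / N ≤ 2 / 3 := by
    rw [div_le_iff₀ hN0]
    have : (3 : ℝ) * m ≤ 2 * N := by exact_mod_cast hm2
    linarith
  have htd : t * d = (u : ℝ) + s / N := by rw [ht]; field_simp
  have hsa : (s : ℝ) * a = m - m * y * N := by
    rw [hs]; push_cast; linear_combination (m : ℝ) * hxyR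
  have hbR : (b : ℝ) = N - a := by
    have : (N : ℝ) = a + b := by rw [hN]; push_cast; ring
    linarith
  have hsb : (s : ℝ) * b = s * N - m + m * y * N := by
    rw [hbR]; linear_combination -hsa
  have huw : (u : ℝ) * w = r - r * x' * d := by
    rw [hu]; push_cast; linear_combination (r : ℝ) * hxyR'
  have e1 : t * ((d : ℝ) * a) = ((u * a - m * y : ℤ) : ℝ) + m / N := by
    rw [show t * ((d : ℝ) * a) = t * d * a by ring, htd]
    push_cast
    field_simp
    linear_combination hsa
  have e2 : t * ((d : ℝ) * b) = ((u * b + s + m * y : ℤ) : ℝ) - m / N := by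
    rw [show t * ((d : ℝ) * b) = t * d * b by ring, htd]
    push_cast
    field_simp
    linear_combination hsb
  have e3 : t * (w : ℝ) = ((-(r * x') : ℤ) : ℝ) + ((r : ℝ) / d + θ) := by
    rw [ht, hθ]
    push_cast
    field_simp
    linear_combination (N : ℝ) * huw
  have hrl : (d : ℝ) / 4 - θ * d ≤ r := Int.le_ceil _
  have hru : (r : ℝ) < (d : ℝ) / 4 - θ * d + 1 := Int.ceil_lt_add_one _
  have hd2 : (2 : ℝ) ≤ d := by exact_mod_cast hd
  clear_value s θ r u t
  clear hr hs ht hu hθ hm hN htd hsa hsb huw hbR hxy hxy' hxyR hxyR'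
  refine ⟨t, ?_, ?_, ?_⟩
  · -- runner d*a
    refine dnn_ge _ _ (u * a - m * y) ?_ ?_ <;> rw [e1] <;> push_cast <;> linarith
  · -- runner d*b
    refine dnn_ge _ _ (u * b + s + m * y - 1) ?_ ?_ <;> rw [e2] <;> push_cast <;> linarith
  · -- runner w
    have h14 : (1 : ℝ) / 4 ≤ (r : ℝ) / d + θ := by
      have h' : (1 / 4 - θ) ≤ (r : ℝ) / d := by
        rw [le_div_iff₀ hd0]; nlinarith
      linarith
    have h34 : (r : ℝ) / d + θ ≤ 3 / 4 := by
      have hinv : (1 / (d : ℝ)) * d = 1 := by field_simp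
      have h' : (r : ℝ) / d < 1 / 4 - θ + 1 / d := by
        rw [div_lt_iff₀ hd0]
        nlinarith [hru, hinv]
      have h1d : (1 : ℝ) / d ≤ 1 / 2 := by
        rw [div_le_div_iff₀ hd0 (by norm_num)]; linarith
      linarith
    refine dnn_ge _ _ (-(r * x')) ?_ ?_ <;> rw [e3] <;> push_cast <;> linarith

lemma main_aux (p q w : ℕ) (hp : 0 < p) (hq : 0 < q) (hw : 0 < w)
    (hd : 2 ≤ Nat.gcd p q) (hg : Nat.gcd (Nat.gcd p q) w = 1) :
    ∃ t : ℝ, 1/4 ≤ dnn (t * p) ∧ 1/4 ≤ dnn (t * q) ∧ 1/4 ≤ dnn (t * w) := by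
  set d : ℕ := Nat.gcd p q with hdd
  have hd0 : 0 < d := by omega
  have hap : d ∣ p := Nat.gcd_dvd_left p q
  have haq : d ∣ q := Nat.gcd_dvd_right p q
  have ha : 0 < p / d := Nat.div_pos (Nat.le_of_dvd hp hap) hd0
  have hb : 0 < q / d := Nat.div_pos (Nat.le_of_dvd hq haq) hd0
  have hab : Nat.Coprime (p / d) (q / d) := Nat.coprime_div_gcd_div_gcd hd0
  obtain ⟨t, h1, h2, h3⟩ := key (p / d) (q / d) w d ha hb hw hd hab hg
  have ep : (d : ℝ) * ((p / d : ℕ) : ℝ) = p := by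
    exact_mod_cast congrArg (Nat.cast (R := ℝ)) (Nat.mul_div_cancel' hap)
  have eq' : (d : ℝ) * ((q / d : ℕ) : ℝ) = q := by
    exact_mod_cast congrArg (Nat.cast (R := ℝ)) (Nat.mul_div_cancel' haq)
  rw [ep] at h1
  rw [eq'] at h2
  exact ⟨t, h1, h2, h3⟩

theorem stmt_6 (v₁ v₂ v₃ : ℕ) (h₁ : 0 < v₁) (h₂ : 0 < v₂) (h₃ : 0 < v₃)
    (hgcd : Nat.gcd (Nat.gcd v₁ v₂) v₃ = 1)
    (hpair : 2 ≤ Nat.gcd v₁ v₂ ∨ 2 ≤ Nat.gcd v₁ v₃ ∨ 2 ≤ Nat.gcd v₂ v₃) :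
    ML ![(v₁ : ℝ), (v₂ : ℝ), (v₃ : ℝ)] ≥ 1 / 4 := by
  rw [ge_iff_le]
  rcases hpair with h | h | h
  · obtain ⟨t, hh1, hh2, hh3⟩ := main_aux v₁ v₂ v₃ h₁ h₂ h₃ h hgcd
    refine ML_ge _ _ t fun i => ?_
    fin_cases i
    · simpa using hh1
    · simpa using hh2
    · simpa using hh3
  · have hg : Nat.gcd (Nat.gcd v₁ v₃) v₂ = 1 := by
      refine Nat.dvd_one.mp ?_
      rw [← hgcd]
      exact Nat.dvd_gcd
        (Nat.dvd_gcd ((Nat.gcd_dvd_left _ _).trans (Nat.gcd_dvd_left v₁ v₃))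
          (Nat.gcd_dvd_right _ _))
        ((Nat.gcd_dvd_left _ _).trans (Nat.gcd_dvd_right v₁ v₃))
    obtain ⟨t, hh1, hh2, hh3⟩ := main_aux v₁ v₃ v₂ h₁ h₃ h₂ h hg
    refine ML_ge _ _ t fun i => ?_
    fin_cases i
    · simpa using hh1
    · simpa using hh3
    · simpa using hh2
  · have hg : Nat.gcd (Nat.gcd v₂ v₃) v₁ = 1 := by
      refine Nat.dvd_one.mp ?_
      rw [← hgcd]
      exact Nat.dvd_gcd
        (Nat.dvd_gcd (Nat.gcd_dvd_right _ _)
          ((Nat.gcd_dvd_left _ _).trans (Nat.gcd_dvd_left v₂ v₃)))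
        ((Nat.gcd_dvd_left _ _).trans (Nat.gcd_dvd_right v₂ v₃))
    obtain ⟨t, hh1, hh2, hh3⟩ := main_aux v₂ v₃ v₁ h₂ h₃ h₁ h hg
    refine ML_ge _ _ t fun i => ?_
    fin_cases i
    · simpa using hh3
    · simpa using hh1
    · simpa using hh2
end

section
/- (Shifted Lonely Runner Conjecture for three moving runners) Let v₁, v₂, v₃ be pairwise distinct positive integers with gcd(v₁, v₂, v₃) = 1, and let s₁, s₂, s₃ be arbitrary real starting points. Then there exists a real number t such that ‖sⱼ + t·vⱼ‖ ≥ 1/4 for all j ∈ {1, 2, 3}. -/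
/-!
Suppose no such time exists and order the speeds `a < b < c`. Inside each far interval of
runner `a` (length `1/(2a)`), runner `c` is far at least once in every window of length
`1/(2c)`, and runner `b` must be near at all those times; as two near intervals of `b` are
separated by a far interval of length `1/(2b) > 1/(2c)`, they all lie in one near interval of
`b`. Its offset `θⱼ` from the start of the `j`-th far interval of `a` is confined to a window of
width `1/c + 1/(2b) - 1/(2a)`, while by Bézout the `θⱼ` meet every coset of `(1/b)ℤ` of the form
`θ + d·gcd(a,b)/(ab)`. This forces `ac + bc < 2ab + 2 gcd(a,b) c`, hence `b = a + g` with
`g = gcd(a,b)`. For `g = 1` only `(1,2,3)` survives, and there the near intervals of `c` at both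
ends of one far interval of `a` would start a non-multiple of `1/3` apart. For `g ≥ 2` the offset
is constant along `j ∈ (a/g)ℤ`, so the near intervals of `c` at one end of these far intervals
have offsets in a window of width `1/(2c)`; since `gcd(g,c) = 1` these offsets meet every coset
of `(1/c)ℤ` in `(1/(gc))ℤ`, which forces `g < 2`.
-/

open Set

def Near (v s t : ℝ) : Prop := ∃ m : ℤ, |s + t * v - m| < 1 / 4

theorem le_dnn_of_not_near {v s t : ℝ} (h : ¬Near v s t) : 1 / 4 ≤ dnn (s + t * v) :=
  le_ciInf fun m => not_lt.mp fun hm => h ⟨m, hm⟩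

/-- Runner `(v, s)` is near in `(nearStart v s k, farStart v s k)` and far in
`[farStart v s k, nearStart v s (k + 1)]`. -/
noncomputable def nearStart (v s : ℝ) (k : ℤ) : ℝ := (k - 1 / 4 - s) / v

noncomputable def farStart (v s : ℝ) (k : ℤ) : ℝ := (k + 1 / 4 - s) / v

section Runner

variable {v s : ℝ}

theorem farStart_sub_nearStart (k : ℤ) : farStart v s k - nearStart v s k = 1 / (2 * v) := by
  unfold farStart nearStart
  ring

theorem nearStart_add_one (k : ℤ) : nearStart v s (k + 1) = farStart v s k + 1 / (2 * v) := by
  unfold farStart nearStart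
  push_cast
  ring

theorem nearStart_sub_nearStart (k k' : ℤ) :
    nearStart v s k' - nearStart v s k = (k' - k) / v := by
  unfold nearStart
  ring

theorem nearStart_le_nearStart (hv : 0 < v) {k k' : ℤ} (h : k ≤ k') :
    nearStart v s k ≤ nearStart v s k' := by
  unfold nearStart
  gcongr

theorem near_iff (hv : 0 < v) {t : ℝ} :
    Near v s t ↔ ∃ k : ℤ, t ∈ Ioo (nearStart v s k) (farStart v s k) := by
  unfold Near nearStart farStart
  refine exists_congr fun k => ?_
  rw [abs_lt, mem_Ioo, div_lt_iff₀ hv, lt_div_iff₀ hv]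
  constructor <;> rintro ⟨h₁, h₂⟩ <;> constructor <;> linarith

theorem not_near_of_mem_Icc (hv : 0 < v) {k : ℤ} {t : ℝ}
    (ht : t ∈ Icc (farStart v s k) (nearStart v s (k + 1))) : ¬Near v s t := by
  rintro ⟨m, hm⟩
  obtain ⟨h₁, h₂⟩ := ht
  rw [farStart, div_le_iff₀ hv] at h₁
  rw [nearStart] at h₂
  rw [le_div_iff₀ hv] at h₂
  rw [abs_lt] at hm
  rcases le_or_gt m k with hmk | hmk
  · have : (m : ℝ) ≤ k := by exact_mod_cast hmk
    linarith
  · have : (k : ℝ) + 1 ≤ m := by exact_mod_cast hmk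
    push_cast at h₂
    linarith

theorem not_near_farStart (hv : 0 < v) (k : ℤ) : ¬Near v s (farStart v s k) :=
  not_near_of_mem_Icc hv
    ⟨le_rfl, by rw [nearStart_add_one]; exact le_add_of_nonneg_right (by positivity)⟩

theorem not_near_nearStart (hv : 0 < v) (k : ℤ) : ¬Near v s (nearStart v s k) := by
  have h := nearStart_add_one (v := v) (s := s) (k - 1)
  rw [sub_add_cancel] at h
  exact not_near_of_mem_Icc (k := k - 1) hv
    ⟨by rw [h]; exact le_add_of_nonneg_right (by positivity), by rw [sub_add_cancel]⟩

theorem exists_not_near_mem_Icc (hv : 0 < v) (x : ℝ) :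
    ∃ t ∈ Icc x (x + 1 / (2 * v)), ¬Near v s t := by
  set k := ⌈x * v + s - 1 / 4⌉
  have hk₁ : x ≤ farStart v s k := by
    rw [farStart, le_div_iff₀ hv]
    linarith [Int.le_ceil (x * v + s - 1 / 4)]
  have hk₂ : farStart v s k < x + 2 * (1 / (2 * v)) := by
    rw [farStart, div_lt_iff₀ hv, add_mul, show 2 * (1 / (2 * v)) * v = 1 by field_simp]
    linarith [Int.ceil_lt_add_one (x * v + s - 1 / 4)]
  by_cases hk : farStart v s k ≤ x + 1 / (2 * v)
  · exact ⟨_, ⟨hk₁, hk⟩, not_near_farStart hv k⟩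
  · have := farStart_sub_nearStart (v := v) (s := s) k
    exact ⟨_, ⟨by linarith, by linarith⟩, not_near_nearStart hv k⟩

theorem le_of_near_of_near (hv : 0 < v) {k₁ k₂ : ℤ} {z₁ z₂ : ℝ} (hz : z₁ ≤ z₂)
    (h₁ : nearStart v s k₁ < z₁) (h₂ : z₂ < farStart v s k₂) : k₁ ≤ k₂ := by
  by_contra! hk
  have := nearStart_le_nearStart (s := s) hv (show k₂ + 1 ≤ k₁ by omega)
  have := nearStart_add_one (v := v) (s := s) k₂
  have : 0 < 1 / (2 * v) := by positivity
  linarith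

end Runner

def InNearInterval (b sb c sc : ℝ) (I : Set ℝ) (k : ℤ) : Prop :=
  ∀ z ∈ I, ¬Near c sc z → z ∈ Ioo (nearStart b sb k) (farStart b sb k)

section TwoRunners

variable {b c sb sc x y : ℝ}

theorem exists_inNearInterval (hb : 0 < b) (hbc : b ≤ c) (hxy : x + 1 / (2 * c) ≤ y)
    (hcover : ∀ z ∈ Icc x y, ¬Near c sc z → Near b sb z) :
    ∃ k : ℤ, InNearInterval b sb c sc (Icc x y) k := by
  have hc : 0 < c := hb.trans_le hbc
  -- Between two distinct near intervals of `b` lies a far interval of `b`, long enough to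
  -- contain a time at which `c` is far as well.
  have unique : ∀ z₁ ∈ Icc x y, ∀ z₂ ∈ Icc x y, z₁ ≤ z₂ → ∀ k₁ k₂ : ℤ,
      z₁ ∈ Ioo (nearStart b sb k₁) (farStart b sb k₁) →
      z₂ ∈ Ioo (nearStart b sb k₂) (farStart b sb k₂) → k₁ = k₂ := by
    intro z₁ hz₁ z₂ hz₂ hz k₁ k₂ h₁ h₂
    by_contra hne
    have hlt := lt_of_le_of_ne (le_of_near_of_near hb hz h₁.1 h₂.2) hne
    obtain ⟨t, ⟨ht₁, ht₂⟩, htc⟩ := exists_not_near_mem_Icc (s := sc) hc (farStart b sb k₁)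
    have := nearStart_le_nearStart (s := sb) hb (show k₁ + 1 ≤ k₂ by omega)
    have := nearStart_add_one (v := b) (s := sb) k₁
    have : 1 / (2 * c) ≤ 1 / (2 * b) := by gcongr
    refine not_near_of_mem_Icc hb ⟨ht₁, by linarith⟩ (hcover t ⟨?_, ?_⟩ htc)
    · linarith [hz₁.1, h₁.2]
    · linarith [hz₂.2, h₂.1]
  obtain ⟨z₀, ⟨hz₀₁, hz₀₂⟩, hz₀c⟩ := exists_not_near_mem_Icc (s := sc) hc x
  have hz₀ : z₀ ∈ Icc x y := ⟨hz₀₁, hz₀₂.trans hxy⟩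
  obtain ⟨k, hk⟩ := (near_iff hb).1 (hcover z₀ hz₀ hz₀c)
  refine ⟨k, fun z hz hzc => ?_⟩
  obtain ⟨k', hk'⟩ := (near_iff hb).1 (hcover z hz hzc)
  obtain rfl : k' = k := by
    rcases le_total z z₀ with h | h
    · exact unique z hz z₀ hz₀ h k' k hk' hk
    · exact (unique z₀ hz₀ z hz h k k' hk hk').symm
  exact hk'

theorem InNearInterval.nearStart_mem_Ioo {k : ℤ} (hk : InNearInterval b sb c sc (Icc x y) k)
    (hc : 0 < c) (hxy : x + 1 / (2 * c) ≤ y) :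
    nearStart b sb k ∈ Ioo (y - 1 / (2 * c) - 1 / (2 * b)) (x + 1 / (2 * c)) := by
  obtain ⟨z, ⟨hz₁, hz₂⟩, hzc⟩ := exists_not_near_mem_Icc (s := sc) hc x
  obtain ⟨w, ⟨hw₁, hw₂⟩, hwc⟩ := exists_not_near_mem_Icc (s := sc) hc (y - 1 / (2 * c))
  have hz := (hk z ⟨hz₁, by linarith⟩ hzc).1
  have hw := (hk w ⟨by linarith, by linarith⟩ hwc).2
  have := farStart_sub_nearStart (v := b) (s := sb) k
  constructor <;> linarith

theorem InNearInterval.exists_nearStart_mem_Ioo_left {k : ℤ}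
    (hk : InNearInterval b sb c sc (Icc x y) k) (hc : 0 < c) (hxy : x + 1 / (2 * c) ≤ y)
    (hx : x ≤ nearStart b sb k) :
    ∃ m : ℤ, nearStart c sc m ∈ Ioo (nearStart b sb k - 1 / (2 * c)) x := by
  have hpos : 0 < 1 / (2 * c) := by positivity
  have hxc : Near c sc x := not_not.1 fun h => (hk x ⟨le_rfl, by linarith⟩ h).1.not_ge hx
  obtain ⟨m, hm₁, hm₂⟩ := (near_iff hc).1 hxc
  have := farStart_sub_nearStart (v := c) (s := sc) m
  have hfar := (hk _ ⟨hm₂.le, by linarith⟩ (not_near_farStart hc m)).1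
  exact ⟨m, by linarith, hm₁⟩

theorem InNearInterval.exists_nearStart_mem_Ioo_right {k : ℤ}
    (hk : InNearInterval b sb c sc (Icc x y) k) (hc : 0 < c) (hxy : x + 1 / (2 * c) ≤ y)
    (hy : farStart b sb k ≤ y) :
    ∃ m : ℤ, nearStart c sc m ∈ Ioo (y - 1 / (2 * c)) (farStart b sb k) := by
  have hpos : 0 < 1 / (2 * c) := by positivity
  have hyc : Near c sc y := not_not.1 fun h => (hk y ⟨by linarith, le_rfl⟩ h).2.not_ge hy
  obtain ⟨m, hm₁, hm₂⟩ := (near_iff hc).1 hyc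
  have := farStart_sub_nearStart (v := c) (s := sc) m
  have hnear := (hk _ ⟨by linarith, hm₁.le⟩ (not_near_nearStart hc m)).2
  exact ⟨m, by linarith, hnear⟩

end TwoRunners

theorem sub_lt_sub_of_forall_exists_mem_Ioo {m s base lo hi : ℝ} (hm : 0 < m) (hs : 0 < s)
    (h : ∀ d : ℤ, ∃ n : ℤ, base + d * s + n * m ∈ Ioo lo hi) : m - s < hi - lo := by
  set d := ⌈(hi - base) / s⌉
  have hd₁ : hi ≤ base + d * s := by
    have := Int.le_ceil ((hi - base) / s)
    rw [div_le_iff₀ hs] at this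
    linarith
  have hd₂ : base + d * s < hi + s := by
    have := mul_lt_mul_of_pos_right (Int.ceil_lt_add_one ((hi - base) / s)) hs
    rw [add_mul, div_mul_cancel₀ _ hs.ne'] at this
    linarith
  obtain ⟨n, hlo, hhi⟩ := h d
  have hn : (n : ℝ) ≤ -1 := by
    have : n < 0 := by
      by_contra! hn
      nlinarith [(by exact_mod_cast hn : (0 : ℝ) ≤ n)]
    exact_mod_cast Int.le_sub_one_of_lt this
  nlinarith

theorem exists_mul_sub_mul_eq_gcd_mul_add (p q : ℕ) (f : ℤ → ℤ) (d : ℤ) :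
    ∃ j n : ℤ, f j * p - j * q = d * Nat.gcd p q + n * p := by
  refine ⟨-(d * Nat.gcdB p q), f (-(d * Nat.gcdB p q)) - d * Nat.gcdA p q, ?_⟩
  rw [Nat.gcd_eq_gcd_ab]
  ring

theorem one_div_sub_gcd_div_lt {p q : ℕ} (hp : 0 < p) (hq : 0 < q) (f : ℤ → ℤ)
    {C lo hi : ℝ} (h : ∀ j : ℤ, C + ((f j : ℝ) * p - j * q) / (p * q) ∈ Ioo lo hi) :
    1 / (q : ℝ) - Nat.gcd p q / (p * q) < hi - lo := by
  have hg : (0 : ℝ) < Nat.gcd p q := by exact_mod_cast Nat.gcd_pos_of_pos_left q hp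
  refine sub_lt_sub_of_forall_exists_mem_Ioo (base := C) (by positivity) (by positivity)
    fun d => ?_
  obtain ⟨j, n, hjn⟩ := exists_mul_sub_mul_eq_gcd_mul_add p q f d
  refine ⟨n, ?_⟩
  have hjn : (f j : ℝ) * p - j * q = d * Nat.gcd p q + n * p := by exact_mod_cast hjn
  convert h j using 1
  rw [hjn]
  field_simp
  ring

theorem eq_zero_of_abs_intCast_div_lt {n : ℤ} {q : ℝ} (hq : 0 < q) (h : |(n : ℝ) / q| < 1 / q) :
    n = 0 := by
  rw [abs_div, abs_of_pos hq, div_lt_div_iff_of_pos_right hq] at h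
  exact Int.abs_lt_one_iff.1 (by exact_mod_cast h)

theorem eq_add_gcd_of_mul_add_mul_lt {a b c : ℕ} (hab : a < b) (hbc : b < c)
    (h : a * c + b * c < 2 * a * b + 2 * Nat.gcd a b * c) : b = a + Nat.gcd a b := by
  obtain ⟨x, hx⟩ : Nat.gcd a b ∣ b - a := Nat.dvd_sub (Nat.gcd_dvd_right a b) (Nat.gcd_dvd_left a b)
  have hx₁ : x ≠ 0 := by rintro rfl; omega
  have hx₂ : x < 2 := by
    by_contra! hx₂
    have : Nat.gcd a b * 2 ≤ Nat.gcd a b * x := Nat.mul_le_mul_left _ hx₂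
    have : (a + 2 * Nat.gcd a b) * c ≤ b * c := Nat.mul_le_mul_right c (by omega)
    nlinarith [Nat.mul_le_mul_left a hbc.le]
  obtain rfl : x = 1 := by omega
  omega

theorem eq_one_and_eq_three {a c : ℕ} (ha : 0 < a) (hc : a + 1 < c)
    (h : a * c + (a + 1) * c < 2 * a * (a + 1) + 2 * c) : a = 1 ∧ c = 3 := by
  obtain rfl : a = 1 := by
    by_contra ha₁
    have ha₂ : (2 : ℤ) ≤ a := by omega
    have hc₂ : (a : ℤ) + 2 ≤ c := by omega
    zify at h
    nlinarith [mul_nonneg (sub_nonneg.2 hc₂) (show (0 : ℤ) ≤ 2 * a - 1 by omega)]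
  omega

section ThreeRunners

variable {a b c sa sb sc : ℝ}

theorem nearStart_sub_farStart (ha : a ≠ 0) (hb : b ≠ 0) (j k : ℤ) :
    nearStart b sb k - farStart a sa j
      = (-(1 / 4 + sb) / b - (1 / 4 - sa) / a) + (k * a - j * b) / (a * b) := by
  unfold nearStart farStart
  field_simp
  ring

theorem add_one_div_le_add_one_div (ha : 0 < a) (hac : a ≤ c) (x : ℝ) :
    x + 1 / (2 * c) ≤ x + 1 / (2 * a) := by
  gcongr

theorem exists_inNearInterval_of_cover (ha : 0 < a) (hab : a < b) (hbc : b < c)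
    (hcover : ∀ t, ¬Near a sa t → ¬Near c sc t → Near b sb t) (j : ℤ) :
    ∃ k : ℤ, InNearInterval b sb c sc
      (Icc (farStart a sa j) (farStart a sa j + 1 / (2 * a))) k :=
  exists_inNearInterval (ha.trans hab) hbc.le
    (add_one_div_le_add_one_div ha (hab.trans hbc).le _) fun z hz =>
      hcover z (not_near_of_mem_Icc ha ⟨hz.1, by rw [nearStart_add_one]; exact hz.2⟩)

theorem false_of_cover_one_two_three
    (hcover : ∀ t, ¬Near 1 sa t → ¬Near 3 sc t → Near 2 sb t) : False := by
  obtain ⟨k, hk⟩ := exists_inNearInterval_of_cover one_pos one_lt_two (by norm_num) hcover 0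
  have hxy := add_one_div_le_add_one_div one_pos (by norm_num : (1 : ℝ) ≤ 3) (farStart 1 sa 0)
  obtain ⟨hk₁, hk₂⟩ := hk.nearStart_mem_Ioo (by norm_num) hxy
  have hfar := farStart_sub_nearStart (v := 2) (s := sb) k
  norm_num at hk₁ hk₂ hfar
  obtain ⟨m₁, hm₁, hm₁'⟩ := hk.exists_nearStart_mem_Ioo_left (by norm_num) hxy (by linarith)
  obtain ⟨m₂, hm₂, hm₂'⟩ := hk.exists_nearStart_mem_Ioo_right (by norm_num) hxy (by linarith)
  norm_num at hm₁ hm₂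
  -- the near intervals of `c` around the two ends of the far interval start between
  -- `1/3` and `5/12` apart, yet their distance is a multiple of `1/3`
  have hd := nearStart_sub_nearStart (v := 3) (s := sc) m₁ m₂
  have h₁ : ((1 : ℤ) : ℝ) < ((m₂ - m₁ : ℤ) : ℝ) := by push_cast; linarith
  have h₂ : ((m₂ - m₁ : ℤ) : ℝ) < ((2 : ℤ) : ℝ) := by push_cast; linarith
  have := Int.cast_lt.1 h₁
  have := Int.cast_lt.1 h₂
  omega

theorem nearStart_sub_farStart_mul_eq {g : ℝ} {a' : ℤ} (hg : 0 < g) (ha' : 0 < a')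
    (ha : a = g * a') (hb : b = a + g) (hbc : b < c) {k : ℤ → ℤ}
    (hk : ∀ j, InNearInterval b sb c sc
      (Icc (farStart a sa j) (farStart a sa j + 1 / (2 * a))) (k j)) (i : ℤ) :
    nearStart b sb (k (a' * i)) - farStart a sa (a' * i)
      = nearStart b sb (k 0) - farStart a sa 0 := by
  have ha'₁ : (1 : ℝ) ≤ a' := by exact_mod_cast ha'
  have hA : 0 < a := by rw [ha]; positivity
  have hB : 0 < b := by linarith
  have hC : 0 < c := by linarith
  have hab : 1 / (2 * b) < 1 / (2 * a) := by gcongr; linarith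
  have hbc' : 1 / (2 * c) < 1 / (2 * b) := by gcongr
  have hb₂ : 1 / b = 2 * (1 / (2 * b)) := by field_simp
  have hxy := add_one_div_le_add_one_div hA (by linarith : a ≤ c)
  obtain ⟨hi₁, hi₂⟩ := (hk (a' * i)).nearStart_mem_Ioo hC (hxy _)
  obtain ⟨h0₁, h0₂⟩ := (hk 0).nearStart_mem_Ioo hC (hxy _)
  -- the two offsets differ by a multiple of `1 / b`, but both lie in a window shorter than `1 / b`
  have hdiff : (nearStart b sb (k (a' * i)) - farStart a sa (a' * i))
      - (nearStart b sb (k 0) - farStart a sa 0)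
      = ((k (a' * i) - k 0 - i * (a' + 1) : ℤ) : ℝ) / b := by
    have : g * a' + g ≠ 0 := by positivity
    unfold nearStart farStart
    rw [hb, ha]
    push_cast
    field_simp
    ring
  have := eq_zero_of_abs_intCast_div_lt hB (by rw [← hdiff, abs_lt]; constructor <;> linarith)
  rwa [this, Int.cast_zero, zero_div, sub_eq_zero] at hdiff

theorem exists_nearStart_sub_farStart_mem_Ioo (ha : 0 < a) (hab : a < b) (hbc : b < c)
    {a' : ℤ} {k : ℤ → ℤ}
    (hk : ∀ j, InNearInterval b sb c sc
      (Icc (farStart a sa j) (farStart a sa j + 1 / (2 * a))) (k j))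
    (hconst : ∀ i : ℤ, nearStart b sb (k (a' * i)) - farStart a sa (a' * i)
      = nearStart b sb (k 0) - farStart a sa 0) :
    ∃ lo : ℝ, ∀ i : ℤ, ∃ m : ℤ,
      nearStart c sc m - farStart a sa (a' * i) ∈ Ioo lo (lo + 1 / (2 * c)) := by
  have hC : 0 < c := by linarith
  have hxy := add_one_div_le_add_one_div ha (hab.trans hbc).le
  rcases le_or_gt 0 (nearStart b sb (k 0) - farStart a sa 0) with hθ | hθ
  · refine ⟨nearStart b sb (k 0) - farStart a sa 0 - 1 / (2 * c), fun i => ?_⟩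
    have := hconst i
    obtain ⟨m, hm₁, hm₂⟩ := (hk (a' * i)).exists_nearStart_mem_Ioo_left hC (hxy _) (by linarith)
    exact ⟨m, by linarith, by linarith⟩
  · refine ⟨1 / (2 * a) - 1 / (2 * c), fun i => ?_⟩
    have := hconst i
    have := farStart_sub_nearStart (v := b) (s := sb) (k (a' * i))
    have : 1 / (2 * b) < 1 / (2 * a) := by gcongr
    obtain ⟨m, hm₁, hm₂⟩ :=
      (hk (a' * i)).exists_nearStart_mem_Ioo_right hC (hxy _) (by linarith)
    exact ⟨m, by linarith, by linarith⟩

end ThreeRunners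

theorem mul_add_mul_lt_of_cover {a b c : ℕ} (ha : 0 < a) (hab : a < b) (hbc : b < c)
    {sa sb sc : ℝ} (hcover : ∀ t, ¬Near a sa t → ¬Near c sc t → Near b sb t) :
    a * c + b * c < 2 * a * b + 2 * Nat.gcd a b * c := by
  have hA : (0 : ℝ) < a := by exact_mod_cast ha
  have hAB : (a : ℝ) < b := by exact_mod_cast hab
  have hBC : (b : ℝ) < c := by exact_mod_cast hbc
  have hB : (0 : ℝ) < b := hA.trans hAB
  have hC : (0 : ℝ) < c := hB.trans hBC
  choose k hk using exists_inNearInterval_of_cover hA hAB hBC hcover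
  have hθ : ∀ j : ℤ, (-(1 / 4 + sb) / b - (1 / 4 - sa) / a) + ((k j : ℝ) * a - j * b) / (a * b)
      ∈ Ioo (1 / (2 * a) - 1 / (2 * c) - 1 / (2 * b) : ℝ) (1 / (2 * c)) := by
    intro j
    rw [← nearStart_sub_farStart hA.ne' hB.ne']
    obtain ⟨h₁, h₂⟩ :=
      (hk j).nearStart_mem_Ioo hC (add_one_div_le_add_one_div hA (hAB.trans hBC).le _)
    constructor <;> linarith
  have key := one_div_sub_gcd_div_lt ha (ha.trans hab) k hθ
  have e : (1 / (2 * c) - (1 / (2 * a) - 1 / (2 * c) - 1 / (2 * b)))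
      - (1 / b - Nat.gcd a b / (a * b))
      = (2 * a * b + 2 * Nat.gcd a b * c - (a * c + b * c) : ℝ) / (2 * a * b * c) := by
    field_simp
    ring
  have := (div_pos_iff_of_pos_right (by positivity)).1 (e ▸ sub_pos.2 key)
  have : ((a * c + b * c : ℕ) : ℝ) < ((2 * a * b + 2 * Nat.gcd a b * c : ℕ) : ℝ) := by
    push_cast
    linarith
  exact_mod_cast this

theorem gcd_lt_two_of_cover {a b c : ℕ} (ha : 0 < a) (hab : a < b) (hbc : b < c)
    (hb : b = a + Nat.gcd a b) (hcop : Nat.Coprime (Nat.gcd a b) c) {sa sb sc : ℝ}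
    (hcover : ∀ t, ¬Near a sa t → ¬Near c sc t → Near b sb t) : Nat.gcd a b < 2 := by
  set g := Nat.gcd a b
  obtain ⟨a', ha'⟩ : g ∣ a := Nat.gcd_dvd_left a b
  have hg : 0 < g := Nat.gcd_pos_of_pos_left b ha
  have hA' : 0 < a' := Nat.pos_of_mul_pos_left (ha'.symm ▸ ha)
  have hA : (0 : ℝ) < a := by exact_mod_cast ha
  have hAB : (a : ℝ) < b := by exact_mod_cast hab
  have hBC : (b : ℝ) < c := by exact_mod_cast hbc
  have hC : (0 : ℝ) < c := by linarith
  have hAeq : (a : ℝ) = g * a' := by exact_mod_cast ha'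
  choose k hk using exists_inNearInterval_of_cover hA hAB hBC hcover
  obtain ⟨lo, hlo⟩ := exists_nearStart_sub_farStart_mem_Ioo hA hAB hBC hk
    (nearStart_sub_farStart_mul_eq (g := g) (a' := a') (by exact_mod_cast hg) (by exact_mod_cast hA')
      (by push_cast; exact hAeq) (by exact_mod_cast hb) hBC hk)
  choose m hm using hlo
  have key := one_div_sub_gcd_div_lt (q := c) hg (by omega) m
    (C := -(1 / 4 + sc) / c - (1 / 4 - sa) / a) fun i => by
      convert hm i using 1
      have : (a' : ℝ) ≠ 0 := by exact_mod_cast hA'.ne'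
      unfold nearStart farStart
      push_cast
      rw [hAeq]
      field_simp
      ring
  rw [hcop, Nat.cast_one, add_sub_cancel_left] at key
  by_contra! hg₂
  have : 1 / ((g : ℝ) * c) ≤ 1 / (2 * c) := by gcongr; exact_mod_cast hg₂
  have : 1 / (c : ℝ) = 2 * (1 / (2 * c)) := by field_simp
  linarith

theorem exists_not_near_of_lt {a b c : ℕ} (ha : 0 < a) (hab : a < b) (hbc : b < c)
    (hgcd : Nat.gcd (Nat.gcd a b) c = 1) (sa sb sc : ℝ) :
    ∃ t : ℝ, ¬Near a sa t ∧ ¬Near b sb t ∧ ¬Near c sc t := by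
  by_contra! h
  have hcover : ∀ t, ¬Near a sa t → ¬Near c sc t → Near b sb t :=
    fun t hat hct => not_not.1 fun hbt => hct (h t hat hbt)
  have hlt := mul_add_mul_lt_of_cover ha hab hbc hcover
  have hb := eq_add_gcd_of_mul_add_mul_lt hab hbc hlt
  rcases (Nat.gcd a b).lt_or_ge 2 with hg | hg
  · have hg₁ : Nat.gcd a b = 1 := by have := Nat.gcd_pos_of_pos_left b ha; omega
    rw [hg₁] at hb hlt
    subst hb
    obtain ⟨rfl, rfl⟩ := eq_one_and_eq_three ha hbc (by simpa using hlt)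
    norm_num at hcover
    exact false_of_cover_one_two_three hcover
  · exact (gcd_lt_two_of_cover ha hab hbc hb hgcd hcover).not_ge hg

theorem stmt_9 (v₁ v₂ v₃ : ℕ) (h₁ : 0 < v₁) (h₂ : 0 < v₂) (h₃ : 0 < v₃)
    (hne₁₂ : v₁ ≠ v₂) (hne₁₃ : v₁ ≠ v₃) (hne₂₃ : v₂ ≠ v₃)
    (hgcd : Nat.gcd (Nat.gcd v₁ v₂) v₃ = 1) (s₁ s₂ s₃ : ℝ) :
    ∃ t : ℝ, 1 / 4 ≤ dnn (s₁ + t * v₁) ∧ 1 / 4 ≤ dnn (s₂ + t * v₂) ∧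
      1 / 4 ≤ dnn (s₃ + t * v₃) := by
  suffices ∃ t : ℝ, ¬Near v₁ s₁ t ∧ ¬Near v₂ s₂ t ∧ ¬Near v₃ s₃ t by
    obtain ⟨t, ht₁, ht₂, ht₃⟩ := this
    exact ⟨t, le_dnn_of_not_near ht₁, le_dnn_of_not_near ht₂, le_dnn_of_not_near ht₃⟩
  wlog h₁₂ : v₁ < v₂ generalizing v₁ v₂ v₃ s₁ s₂ s₃
  · obtain ⟨t, ht₂, ht₁, ht₃⟩ := this v₂ v₁ v₃ h₂ h₁ h₃ hne₁₂.symm hne₂₃ hne₁₃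
      (by rwa [Nat.gcd_comm v₂]) s₂ s₁ s₃ (by omega)
    exact ⟨t, ht₁, ht₂, ht₃⟩
  wlog h₂₃ : v₂ < v₃ generalizing v₁ v₂ v₃ s₁ s₂ s₃
  · rcases lt_or_gt_of_ne hne₁₃ with h₁₃ | h₃₁
    · obtain ⟨t, ht₁, ht₃, ht₂⟩ := this v₁ v₃ v₂ h₁ h₃ h₂ hne₁₃ hne₁₂ hne₂₃.symm
        (by rwa [Nat.gcd_right_comm]) s₁ s₃ s₂ h₁₃ (by omega)
      exact ⟨t, ht₁, ht₂, ht₃⟩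
    · obtain ⟨t, ht₃, ht₁, ht₂⟩ := this v₃ v₁ v₂ h₃ h₁ h₂ hne₁₃.symm hne₂₃.symm hne₁₂
        (by rwa [Nat.gcd_comm v₃, Nat.gcd_right_comm]) s₃ s₁ s₂ h₃₁ h₁₂
      exact ⟨t, ht₁, ht₂, ht₃⟩
  exact exists_not_near_of_lt h₁ h₁₂ h₂₃ hgcd s₁ s₂ s₃
end

section
/- Fix n ≥ 2. Assume (i) for every choice of n−1 positive real speeds u₁, …, u_{n−1}, one has ML(u₁, …, u_{n−1}) ≥ 1/n, and (ii) for every choice of n positive integer speeds w₁, …, wₙ, either there exist a positive integer s and an integer k with 1 ≤ k ≤ n such that ML(w₁, …, wₙ) = s/(ns + k), or ML(w₁, …, wₙ) ≥ 1/n. Then for every choice of n positive real speeds v₁, …, vₙ, either there exist a positive integer s and an integer k with 1 ≤ k ≤ n such that ML(v₁, …, vₙ) = s/(ns + k), or ML(v₁, …, vₙ) ≥ 1/n. -/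
lemma dnn_eq_norm_coe (x : ℝ) : dnn x = ‖(x : UnitAddCircle)‖ := by
  rw [UnitAddCircle.norm_eq, dnn_eq_abs_sub_round]

lemma dnn_nonneg (x : ℝ) : 0 ≤ dnn x := by
  rw [dnn_eq_abs_sub_round]; exact abs_nonneg _

lemma dnn_add_intCast (x : ℝ) (m : ℤ) : dnn (x + m) = dnn x := by
  rw [dnn_eq_abs_sub_round, dnn_eq_abs_sub_round, round_add_intCast, Int.cast_add,
    add_sub_add_right_eq_sub]

lemma dnn_le_dnn_add_abs_sub (x y : ℝ) : dnn x ≤ dnn y + |x - y| := by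
  rw [dnn_eq_abs_sub_round x, dnn_eq_abs_sub_round y]
  calc |x - round x| ≤ |x - round y| := round_le x _
    _ ≤ |x - y| + |y - round y| := abs_sub_le _ _ _
    _ = |y - round y| + |x - y| := add_comm _ _

theorem exists_pos_nat_forall_dnn_mul_le {ι : Type*} [Fintype ι] (v : ι → ℝ) {ε : ℝ}
    (hε : 0 < ε) : ∃ q : ℕ, 0 < q ∧ ∀ i, dnn (q * v i) ≤ ε := by
  set x : ℕ → ι → UnitAddCircle := fun m i => ((m * v i : ℝ) : UnitAddCircle)
  obtain ⟨_, φ, hφ, hlim⟩ := CompactSpace.tendsto_subseq x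
  obtain ⟨N, hN⟩ := Metric.cauchySeq_iff'.1 hlim.cauchySeq ε hε
  refine ⟨φ (N + 1) - φ N, Nat.sub_pos_of_lt (hφ N.lt_succ_self), fun i => ?_⟩
  rw [Nat.cast_sub (hφ N.lt_succ_self).le, dnn_eq_norm_coe, sub_mul, AddCircle.coe_sub,
    ← dist_eq_norm]
  exact (dist_le_pi_dist _ _ i).trans (hN (N + 1) N.le_succ).le

lemma ML_nonneg {n : ℕ} (v : Fin n → ℝ) : 0 ≤ ML v :=
  Real.iSup_nonneg fun _ => Real.iInf_nonneg fun _ => dnn_nonneg _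

lemma iInf_dnn_le_iInf_dnn_add {ι : Type*} [Finite ι] [Nonempty ι] {x y : ι → ℝ} {ε : ℝ}
    (h : ∀ i, |x i - y i| ≤ ε) : ⨅ i, dnn (x i) ≤ (⨅ i, dnn (y i)) + ε := by
  rw [← sub_le_iff_le_add]
  refine le_ciInf fun i => ?_
  have := ciInf_le (Set.finite_range fun i => dnn (x i)).bddBelow i
  linarith [dnn_le_dnn_add_abs_sub (x i) (y i), h i]

section NeZero

variable {n : ℕ} [NeZero n]

lemma iInf_dnn_mul_le_ML (v : Fin n → ℝ) (t : ℝ) : ⨅ i, dnn (t * v i) ≤ ML v := by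
  refine le_ciSup (f := fun t => ⨅ i, dnn (t * v i)) ⟨1 / 2, ?_⟩ t
  rintro _ ⟨s, rfl⟩
  exact (ciInf_le (Set.finite_range fun i => dnn (s * v i)).bddBelow 0).trans (dnn_le_half _)

/-- Integer speeds make the configuration `1`-periodic in time, so it suffices to compare at
times `t ∈ [0, 1)`, where the error `t * ε` is at most `ε`. -/
lemma ML_intCast_le_ML_add (v : Fin n → ℝ) (w : Fin n → ℤ) {q ε : ℝ}
    (h : ∀ i, |q * v i - w i| ≤ ε) : ML (fun i => (w i : ℝ)) ≤ ML v + ε := by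
  refine ciSup_le fun t => ?_
  have hperiodic : ∀ i, dnn (t * w i) = dnn (Int.fract t * w i) := fun i => by
    rw [← dnn_add_intCast (Int.fract t * w i) (⌊t⌋ * w i), Int.cast_mul, ← add_mul,
      Int.fract_add_floor]
  simp_rw [hperiodic]
  refine (iInf_dnn_le_iInf_dnn_add fun i => ?_).trans
    (add_le_add_left (iInf_dnn_mul_le_ML v (Int.fract t * q)) ε)
  rw [mul_assoc, ← mul_sub, abs_mul, abs_of_nonneg (Int.fract_nonneg t), abs_sub_comm]
  exact (mul_le_of_le_one_left (abs_nonneg _) (Int.fract_lt_one t).le).trans (h i)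

lemma iInf_dnn_mul_le_ML_add (v w : Fin n → ℝ) {q ε : ℝ} (hq : 0 < q)
    (h : ∀ i, |q * v i - w i| ≤ ε) (t : ℝ) :
    ⨅ i, dnn (t * v i) ≤ ML w + |t| / q * ε := by
  refine (iInf_dnn_le_iInf_dnn_add fun i => ?_).trans
    (add_le_add_left (iInf_dnn_mul_le_ML w (t / q)) _)
  have : t * v i - t / q * w i = t / q * (q * v i - w i) := by field_simp
  rw [this, abs_mul, abs_div, abs_of_pos hq]
  exact mul_le_mul_of_nonneg_left (h i) (by positivity)

theorem exists_pos_nat_speeds_near (v : Fin n → ℝ) {ε : ℝ} (hε : 0 < ε) (hεv : ∀ i, ε < v i)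
    (t : ℝ) : ∃ w : Fin n → ℕ, (∀ i, 0 < w i) ∧ ML (fun i => (w i : ℝ)) ≤ ML v + ε ∧
      ⨅ i, dnn (t * v i) ≤ ML (fun i => (w i : ℝ)) + |t| * ε := by
  obtain ⟨q, hq, hqv⟩ := exists_pos_nat_forall_dnn_mul_le v hε
  have hq1 : (1 : ℝ) ≤ q := Nat.one_le_cast.2 hq
  have hround : ∀ i, |q * v i - round (q * v i)| ≤ ε := fun i => dnn_eq_abs_sub_round _ ▸ hqv i
  have hpos : ∀ i, 0 < round (q * v i) := fun i => by
    have : v i ≤ q * v i := le_mul_of_one_le_left (hε.trans (hεv i)).le hq1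
    have : (0 : ℝ) < round (q * v i) := by linarith [(abs_le.1 (hround i)).2, hεv i]
    exact_mod_cast this
  refine ⟨fun i => (round (q * v i)).toNat, fun i => by simpa using hpos i, ?_⟩
  have hcast : (fun i => ((round (q * v i)).toNat : ℝ)) = fun i => ((round (q * v i) : ℤ) : ℝ) :=
    funext fun i => by exact_mod_cast Int.toNat_of_nonneg (hpos i).le
  rw [hcast]
  refine ⟨ML_intCast_le_ML_add v _ hround,
    (iInf_dnn_mul_le_ML_add v _ (by positivity) hround t).trans ?_⟩
  gcongr
  exact div_le_self (abs_nonneg t) hq1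

theorem ML_mem_closure_range_ML_nat (v : Fin n → ℝ) (hv : ∀ i, 0 < v i) :
    ML v ∈ closure (Set.range fun w : {w : Fin n → ℕ // ∀ i, 0 < w i} =>
      ML fun i => (w.1 i : ℝ)) := by
  refine Metric.mem_closure_iff.2 fun η hη => ?_
  obtain ⟨t, ht⟩ : ∃ t, ML v - η / 2 < ⨅ i, dnn (t * v i) :=
    exists_lt_of_lt_ciSup (f := fun t => ⨅ i, dnn (t * v i)) (by unfold ML; linarith)
  obtain ⟨i₀, hi₀⟩ := Finite.exists_min v
  set ε := min (v i₀ / 2) (η / (2 * (|t| + 1)))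
  have hε : 0 < ε := lt_min (half_pos (hv i₀)) (by positivity)
  have hεt : |t| * ε + ε ≤ η / 2 := by
    have := (le_div_iff₀ (by positivity)).1 (min_le_right (v i₀ / 2) (η / (2 * (|t| + 1))))
    linarith
  obtain ⟨w, hw, hup, hlow⟩ := exists_pos_nat_speeds_near v hε
    (fun i => (min_le_left _ _).trans_lt ((half_lt_self (hv i₀)).trans_le (hi₀ i))) t
  refine ⟨_, ⟨⟨w, hw⟩, rfl⟩, ?_⟩
  show dist (ML v) (ML fun i => (w i : ℝ)) < η
  rw [Real.dist_eq, abs_lt]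
  constructor <;> linarith [mul_nonneg (abs_nonneg t) hε.le]

end NeZero

def tightValues (n : ℕ) : Set ℝ := {x | ∃ s k : ℕ, 0 < s ∧ 1 ≤ k ∧ k ≤ n ∧ x = s / (n * s + k)}

/-- Since `s / (n * s + k) ≥ s / (n * (s + 1)) = 1 / n - 1 / (n * (s + 1))`, the values below
`c < 1 / n` have bounded `s`. -/
lemma add_one_mul_one_sub_le_one {n s k : ℕ} {c : ℝ} (hk : 1 ≤ k) (hkn : k ≤ n)
    (h : (s : ℝ) / (n * s + k) ≤ c) : (s + 1) * (1 - n * c) ≤ 1 := by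
  have hk' : (1 : ℝ) ≤ k := Nat.one_le_cast.2 hk
  have hkn' : (k : ℝ) ≤ n := Nat.cast_le.2 hkn
  rw [div_le_iff₀ (by positivity)] at h
  rcases lt_or_ge c 0 with hc | hc
  · have : c * (n * s + k) < 0 := mul_neg_of_neg_of_pos hc (by positivity)
    linarith [(Nat.cast_nonneg s : (0 : ℝ) ≤ s)]
  · nlinarith [mul_le_mul_of_nonneg_left hkn' hc]

lemma finite_tightValues_inter_Iic {n : ℕ} {c : ℝ} (hc : c < 1 / n) :
    (tightValues n ∩ Set.Iic c).Finite := by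
  refine (((Set.finite_Iic ⌊(1 - n * c)⁻¹⌋₊).prod (Set.finite_Iic n)).image
    fun p : ℕ × ℕ => (p.1 : ℝ) / (n * p.1 + p.2)).subset ?_
  rintro _ ⟨⟨s, k, -, hk, hkn, rfl⟩, hsk⟩
  refine ⟨(s, k), ⟨Nat.le_floor ?_, hkn⟩, rfl⟩
  have hn : (0 : ℝ) < n := Nat.cast_pos.2 (hk.trans hkn)
  have hnc : 0 < 1 - n * c := by rw [lt_div_iff₀ hn] at hc; linarith
  rw [← one_div, le_div_iff₀ hnc]
  nlinarith [add_one_mul_one_sub_le_one hk hkn hsk]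

theorem isClosed_tightValues_union_Ici (n : ℕ) :
    IsClosed (tightValues n ∪ Set.Ici (1 / (n : ℝ))) := by
  refine isOpen_compl_iff.1 (isOpen_iff_mem_nhds.2 fun β hβ => ?_)
  rw [Set.mem_compl_iff, Set.mem_union, not_or, Set.mem_Ici, not_le] at hβ
  obtain ⟨hβV, hβn⟩ := hβ
  have hF := (finite_tightValues_inter_Iic (n := n) (c := (β + 1 / n) / 2) (by linarith)).isClosed
  filter_upwards [hF.isOpen_compl.mem_nhds fun h => hβV h.1,
    Iio_mem_nhds (show β < (β + 1 / n) / 2 by linarith)] with x hxF (hxc : x < _)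
  rintro (hxV | hxn)
  · exact hxF ⟨hxV, hxc.le⟩
  · exact absurd (Set.mem_Ici.1 hxn) (by linarith)

theorem stmt_16_general (n : ℕ)
    (hint : ∀ w : Fin n → ℕ, (∀ i, 0 < w i) →
      (∃ s k : ℕ, 0 < s ∧ 1 ≤ k ∧ k ≤ n ∧
          ML (fun i => (w i : ℝ)) = (s : ℝ) / ((n : ℝ) * (s : ℝ) + (k : ℝ))) ∨
        ML (fun i => (w i : ℝ)) ≥ 1 / (n : ℝ))
    (v : Fin n → ℝ) (hv : ∀ i, 0 < v i) :
    (∃ s k : ℕ, 0 < s ∧ 1 ≤ k ∧ k ≤ n ∧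
        ML v = (s : ℝ) / ((n : ℝ) * (s : ℝ) + (k : ℝ))) ∨
      ML v ≥ 1 / (n : ℝ) := by
  rcases n.eq_zero_or_pos with rfl | hn
  · -- `1 / (0 : ℝ) = 0`
    exact Or.inr (by simpa using ML_nonneg v)
  have : NeZero n := ⟨hn.ne'⟩
  have hclosed := isClosed_tightValues_union_Ici n
  have hsub : (Set.range fun w : {w : Fin n → ℕ // ∀ i, 0 < w i} =>
      ML fun i => (w.1 i : ℝ)) ⊆ tightValues n ∪ Set.Ici (1 / (n : ℝ)) := by
    rintro _ ⟨w, rfl⟩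
    exact hint w.1 w.2
  exact hclosed.closure_subset_iff.2 hsub (ML_mem_closure_range_ML_nat v hv)

theorem stmt_16 (n : ℕ) (hn : 2 ≤ n)
    (hLRC : ∀ u : Fin (n - 1) → ℝ, (∀ i, 0 < u i) → ML u ≥ 1 / (n : ℝ))
    (hint : ∀ w : Fin n → ℕ, (∀ i, 0 < w i) →
      (∃ s k : ℕ, 0 < s ∧ 1 ≤ k ∧ k ≤ n ∧
          ML (fun i => (w i : ℝ)) = (s : ℝ) / ((n : ℝ) * (s : ℝ) + (k : ℝ))) ∨
        ML (fun i => (w i : ℝ)) ≥ 1 / (n : ℝ))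
    (v : Fin n → ℝ) (hv : ∀ i, 0 < v i) :
    (∃ s k : ℕ, 0 < s ∧ 1 ≤ k ∧ k ≤ n ∧
        ML v = (s : ℝ) / ((n : ℝ) * (s : ℝ) + (k : ℝ))) ∨
      ML v ≥ 1 / (n : ℝ) :=
  stmt_16_general n hint v hv
end
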